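/- If an automorphism of the Heawood graph has even order and setwise fixes some 14-cycle, then it has order exactly 2. -/

import Mathlib

/-- The Heawood graph `C₁₄` on vertex set `ZMod 14`: distinct vertices `i` and `j` are
adjacent iff `j = i ± 1`, or `i` is even and `j = i + 5`, or `i` is odd and `j = i - 5`
(LCF notation `[5, -5]⁷`). -/
def heawood : SimpleGraph (ZMod 14) where
  Adj i j := i ≠ j ∧ (j = i + 1 ∨ j = i - 1 ∨
    (i.val % 2 = 0 ∧ j = i + 5) ∨ (i.val % 2 = 1 ∧ j = i - 5))
  symm := ⟨by intro i j h; revert i j; decide⟩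
  loopless := ⟨by intro i h; revert i h; decide⟩

/-- The set of `n`-cycles of a graph `G`, each cycle recorded as its edge set (so that
cycles are counted as subgraphs, i.e. up to choice of starting vertex and direction). -/
def cycleEdgeSets {V : Type*} [DecidableEq V] (G : SimpleGraph V) (n : ℕ) :
    Set (Finset (Sym2 V)) :=
  {s | ∃ (v : V) (w : G.Walk v v), w.IsCycle ∧ w.length = n ∧ w.edges.toFinset = s}

/-!
Label the vertices along the invariant Hamiltonian cycle by `ZMod 14`. An automorphism preserving
the cycle acts on the labels dihedrally: as a reflection `i ↦ d - i`, which has order 2, or as a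
rotation `i ↦ i + d`, whose order is the additive order of `d`. If `d` were a unit, a power of the
automorphism would be the rotation by 1; it would carry a chord `{0, j}` (`j ≠ ±1`, which exists
since the graph is cubic) to the chord `{1, 1 + j}`, closing the 4-cycle `0, 1, 1 + j, j`, which the
Heawood graph does not have. A non-unit of `ZMod 14` of even additive order is `7`, of order 2.
-/

namespace ZMod

variable {n : ℕ}

lemma apply_eq_apply_zero_of_periodic {α : Type*} {g : ZMod n → α} (hg : Function.Periodic g 1)
    (i : ZMod n) : g i = g 0 := by
  obtain ⟨k, rfl⟩ := intCast_surjective i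
  induction k using Int.induction_on with
  | zero => simp
  | succ k ih => rw [Int.cast_add, Int.cast_one, hg, ih]
  | pred k ih => rw [← ih, ← hg]; push_cast; ring_nf

lemma eq_add_or_eq_sub_of_injective {f : ZMod n → ZMod n} (hf : Function.Injective f)
    (h2 : (2 : ZMod n) ≠ 0) (hstep : ∀ i, f (i + 1) = f i + 1 ∨ f i = f (i + 1) + 1) :
    (∀ i, f i = f 0 + i) ∨ ∀ i, f i = f 0 - i := by
  have hδ : ∀ i, f (i + 1) - f i = 1 ∨ f (i + 1) - f i = -1 := fun i => by
    rcases hstep i with h | h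
    · left; linear_combination h
    · right; linear_combination -h
  have hδ_periodic : Function.Periodic (fun i => f (i + 1) - f i) 1 := fun i => by
    have hne : f (i + 1 + 1) ≠ f i := fun h => h2 (by linear_combination hf h)
    simp only
    rcases hδ i with h | h <;> rcases hδ (i + 1) with h' | h'
    · rw [h, h']
    · exact absurd (by linear_combination h + h') hne
    · exact absurd (by linear_combination h + h') hne
    · rw [h, h']
  have hlin : ∀ ε, f 1 - f 0 = ε → ∀ i, f i = f 0 + ε * i := fun ε hε i => by
    have hperiodic : Function.Periodic (fun i => f i - ε * i) 1 := fun j => by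
      have := apply_eq_apply_zero_of_periodic hδ_periodic j
      simp only [zero_add] at this
      simp only
      linear_combination this + hε
    linear_combination apply_eq_apply_zero_of_periodic hperiodic i
  rcases hδ 0 with h | h <;> rw [zero_add] at h
  · exact .inl fun i => by rw [hlin 1 h, one_mul]
  · exact .inr fun i => by rw [hlin (-1) h, neg_one_mul, sub_eq_add_neg]

end ZMod

lemma exists_apply_eq_add_or_apply_eq_sub_of_mapsTo {V : Type*} {n : ℕ} {f : V → V}
    (hf : Function.Injective f) (c : ZMod n ≃ V) {s : Set (Sym2 V)}
    (hs : ∀ i j, s(c i, c j) ∈ s ↔ j = i + 1 ∨ i = j + 1)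
    (hfs : Set.MapsTo (Sym2.map f) s s) (h2 : (2 : ZMod n) ≠ 0) :
    (∃ d, ∀ i, f (c i) = c (i + d)) ∨ ∃ d, ∀ i, f (c i) = c (d - i) := by
  set σ : ZMod n → ZMod n := fun i => c.symm (f (c i))
  have hσ (i : ZMod n) : c (σ i) = f (c i) := c.apply_symm_apply _
  have hstep (i : ZMod n) : σ (i + 1) = σ i + 1 ∨ σ i = σ (i + 1) + 1 := by
    rw [← hs, hσ, hσ, ← Sym2.map_mk]
    exact hfs ((hs i (i + 1)).mpr (.inl rfl))
  rcases ZMod.eq_add_or_eq_sub_of_injective (c.symm.injective.comp (hf.comp c.injective)) h2 hstep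
    with h | h
  · exact .inl ⟨σ 0, fun i => by rw [← hσ]; exact congrArg c ((h i).trans (add_comm _ _))⟩
  · exact .inr ⟨σ 0, fun i => by rw [← hσ]; exact congrArg c (h i)⟩

namespace SimpleGraph

variable {V : Type*} {G : SimpleGraph V} {n : ℕ}

namespace Walk

variable {u : V} {w : G.Walk u u} [NeZero n]

lemma getVert_val_natCast (hn : w.length = n) {k : ℕ} (hk : k ≤ n) :
    w.getVert (k : ZMod n).val = w.getVert k := by
  rcases hk.lt_or_eq with hk | rfl
  · rw [ZMod.val_natCast_of_lt hk]
  · rw [ZMod.natCast_self, ZMod.val_zero, getVert_zero, ← hn, getVert_length]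

lemma getVert_val_add_one (hn : w.length = n) (i : ZMod n) :
    w.getVert (i + 1).val = w.getVert (i.val + 1) := by
  rw [← getVert_val_natCast hn (Nat.succ_le_of_lt i.val_lt)]
  push_cast [ZMod.natCast_zmod_val]
  rfl

lemma adj_getVert_val_add_one (hn : w.length = n) (i : ZMod n) :
    G.Adj (w.getVert i.val) (w.getVert (i + 1).val) := by
  rw [getVert_val_add_one hn]
  exact w.adj_getVert_succ (hn ▸ i.val_lt)

lemma IsCycle.injective_getVert_val (hw : w.IsCycle) (hn : w.length = n) :
    Function.Injective fun i : ZMod n => w.getVert i.val := fun i j hij =>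
  ZMod.val_injective n <| hw.getVert_injOn' (by grind [ZMod.val_lt]) (by grind [ZMod.val_lt]) hij

lemma IsCycle.mk_getVert_val_mem_edges_iff (hw : w.IsCycle) (hn : w.length = n) (i j : ZMod n) :
    s(w.getVert i.val, w.getVert j.val) ∈ w.edges ↔ j = i + 1 ∨ i = j + 1 := by
  have hinj := hw.injective_getVert_val hn
  rw [mk_mem_edges_iff_exists]
  constructor
  · rintro ⟨k, hk, hkij⟩
    rw [hn] at hk
    rw [← getVert_val_natCast hn hk.le, ← getVert_val_natCast hn hk,
      Nat.cast_succ, Sym2.eq_iff] at hkij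
    rcases hkij with ⟨hki, hkj⟩ | ⟨hkj, hki⟩
    · left; rw [← hinj hki, ← hinj hkj]
    · right; rw [← hinj hki, ← hinj hkj]
  · rintro (rfl | rfl)
    · exact ⟨i.val, hn ▸ i.val_lt, by rw [getVert_val_add_one hn]⟩
    · exact ⟨j.val, hn ▸ j.val_lt, by rw [getVert_val_add_one hn, Sym2.eq_swap]⟩

end Walk

/-- Adjacent vertices are distinct, so a closed walk `a b c d a` is a 4-cycle iff `a ≠ c` and
`b ≠ d`. -/
def FourCycleFree (G : SimpleGraph V) : Prop :=
  ∀ ⦃a b c d⦄, G.Adj a b → G.Adj b c → G.Adj c d → G.Adj d a → a = c ∨ b = d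

lemma exists_adj_ne_ne_of_two_lt_degree {v : V} [Fintype (G.neighborSet v)]
    (h : 2 < G.degree v) (a b : V) : ∃ u, G.Adj v u ∧ u ≠ a ∧ u ≠ b := by
  classical
  rw [← card_neighborFinset_eq_degree] at h
  obtain ⟨u, hu, hab⟩ :=
    Finset.exists_mem_notMem_of_card_lt_card (Finset.card_le_two.trans_lt h)
  simp only [Finset.mem_insert, Finset.mem_singleton, not_or] at hab
  exact ⟨u, (mem_neighborFinset _ _ _).mp hu, hab⟩

namespace Iso

variable {α : G ≃g G} {c : ZMod n ≃ V} {d : ZMod n}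

lemma pow_apply_eq_add_nsmul (h : ∀ i, α (c i) = c (i + d)) (k : ℕ) (i : ZMod n) :
    (α ^ k) (c i) = c (i + k • d) := by
  induction k with
  | zero => simp [RelIso.one_apply]
  | succ k ih => rw [pow_succ', RelIso.mul_apply, ih, h, succ_nsmul, add_assoc]

lemma orderOf_eq_addOrderOf_of_apply_eq_add (h : ∀ i, α (c i) = c (i + d)) :
    orderOf α = addOrderOf d := by
  rw [← orderOf_ofAdd_eq_addOrderOf, orderOf_eq_orderOf_iff]
  intro k
  rw [← ofAdd_nsmul, ofAdd_eq_one]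
  constructor
  · intro hk
    have h0 := pow_apply_eq_add_nsmul h k 0
    rw [hk, RelIso.one_apply, zero_add] at h0
    exact (c.injective h0).symm
  · intro hk
    ext x
    obtain ⟨i, rfl⟩ := c.surjective x
    rw [pow_apply_eq_add_nsmul h, hk, add_zero, RelIso.one_apply]

lemma orderOf_eq_two_of_apply_eq_sub (h : ∀ i, α (c i) = c (d - i)) (h2 : (2 : ZMod n) ≠ 0) :
    orderOf α = 2 := by
  refine orderOf_eq_prime ?_ fun h1 => h2 ?_
  · ext x
    obtain ⟨i, rfl⟩ := c.surjective x
    rw [sq, RelIso.mul_apply, h, h, sub_sub_cancel, RelIso.one_apply]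
  · have h0 := h 0
    have h1' := h 1
    rw [h1, RelIso.one_apply] at h0 h1'
    have hd := c.injective h0
    have hd1 := c.injective h1'
    linear_combination hd1 - hd

lemma not_isUnit_of_apply_eq_add [NeZero n] [G.LocallyFinite] (hG : G.FourCycleFree)
    (hc : ∀ i, G.Adj (c i) (c (i + 1))) (hdeg : 2 < G.degree (c 0))
    (h : ∀ i, α (c i) = c (i + d)) : ¬IsUnit d := by
  rintro ⟨u, rfl⟩
  obtain ⟨x, hx, hx1, hx2⟩ := exists_adj_ne_ne_of_two_lt_degree hdeg (c 1) (c (-1))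
  obtain ⟨j, rfl⟩ := c.surjective x
  obtain ⟨k, hk⟩ : ∃ k : ℕ, k • (u : ZMod n) = 1 :=
    ⟨(u⁻¹ : (ZMod n)ˣ).val.val, by rw [nsmul_eq_mul, ZMod.natCast_zmod_val, Units.inv_mul]⟩
  have hchord : G.Adj (c 1) (c (1 + j)) := by
    have := (α ^ k).map_adj_iff.mpr hx
    rwa [pow_apply_eq_add_nsmul h, pow_apply_eq_add_nsmul h, hk, zero_add, add_comm] at this
  have h01 := hc 0
  rw [zero_add] at h01
  have hj1 := hc j
  rw [add_comm] at hj1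
  rcases hG h01 hchord hj1.symm hx.symm with h0 | h1
  · exact hx2 (congrArg c (by linear_combination -c.injective h0))
  · exact hx1 (congrArg c (c.injective h1).symm)

end Iso

end SimpleGraph

instance : DecidableRel heawood.Adj := fun i j =>
  inferInstanceAs (Decidable (i ≠ j ∧ (j = i + 1 ∨ j = i - 1 ∨
    (i.val % 2 = 0 ∧ j = i + 5) ∨ (i.val % 2 = 1 ∧ j = i - 5))))

lemma heawood_fourCycleFree : heawood.FourCycleFree := by
  unfold SimpleGraph.FourCycleFree
  decide

lemma heawood_isRegularOfDegree : heawood.IsRegularOfDegree 3 := by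
  unfold SimpleGraph.IsRegularOfDegree
  decide

lemma ZMod.addOrderOf_eq_two_of_even_of_not_isUnit {d : ZMod 14} (hd : ¬IsUnit d)
    (he : Even (addOrderOf d)) : addOrderOf d = 2 := by
  rw [← ZMod.natCast_zmod_val d, ZMod.isUnit_iff_coprime] at hd
  rw [← ZMod.natCast_zmod_val d, ZMod.addOrderOf_coe _ (by norm_num)] at he ⊢
  have h14 : ∀ a < 14, ¬a.Coprime 14 → Even (14 / Nat.gcd 14 a) → 14 / Nat.gcd 14 a = 2 := by
    decide
  exact h14 _ d.val_lt hd he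

/-- If an automorphism of the Heawood graph has even order and setwise fixes some
14-cycle, then it has order exactly 2. -/
theorem heawood_even_order_invariant_fourteenCycle (α : heawood ≃g heawood)
    (hα : Even (orderOf α))
    (h : ∃ s ∈ cycleEdgeSets heawood 14, s.image (Sym2.map ⇑α) = s) :
    orderOf α = 2 := by
  obtain ⟨_, ⟨u, w, hw, hlen, rfl⟩, hfix⟩ := h
  let c : ZMod 14 ≃ ZMod 14 :=
    .ofBijective _ (Finite.injective_iff_bijective.mp (hw.injective_getVert_val hlen))
  have hmaps : Set.MapsTo (Sym2.map α) {e | e ∈ w.edges} {e | e ∈ w.edges} := fun e he =>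
    List.mem_toFinset.mp (hfix ▸ Finset.mem_image_of_mem _ (List.mem_toFinset.mpr he))
  rcases exists_apply_eq_add_or_apply_eq_sub_of_mapsTo α.injective c
    (hw.mk_getVert_val_mem_edges_iff hlen) hmaps (by decide) with ⟨d, hd⟩ | ⟨d, hd⟩
  · have hunit := SimpleGraph.Iso.not_isUnit_of_apply_eq_add heawood_fourCycleFree
      (w.adj_getVert_val_add_one hlen) (by rw [heawood_isRegularOfDegree]; norm_num) hd
    rw [SimpleGraph.Iso.orderOf_eq_addOrderOf_of_apply_eq_add hd] at hα ⊢
    exact ZMod.addOrderOf_eq_two_of_even_of_not_isUnit hunit hα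
  · exact SimpleGraph.Iso.orderOf_eq_two_of_apply_eq_sub hd (by decide)
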